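/- Let S ⊆ lim(ω₁) be stationary and η a ladder system on S whose ladders consist of successor ordinals. Then the space X(η) is not metrizable. -/

import Mathlib

/-
In a metric for `X(η)` each `δ ∈ S` is isolated in `S`, since its basic neighbourhood meets `S`
only in `δ` (ladder points are successors), while its ladder converges to it. Pick a ball of
radius `ε δ` inside that neighbourhood and a ladder point `g δ` within `ε δ / 2` of `δ`. Then `g`
is injective on `S`: if `g δ = g τ`, whichever of `δ`, `τ` has the larger radius captures the
other. But `g` is regressive, and a regressive function on a stationary set is never injective:
by injectivity only countably many `τ` have `g τ < x` for a given `x < ω₁`, so the `x` bounding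
every such `τ` form a club, and a point of `S` in that club would satisfy `δ < δ`.
-/

open Ordinal Set

noncomputable def omega1 : Ordinal := (Cardinal.aleph 1).ord

abbrev O1 : Type _ := ↥(Set.Iio omega1)

def IsLadderOn (δ : Ordinal) (η : ℕ → Ordinal) : Prop :=
  StrictMono η ∧ (∀ n, η n < δ) ∧ ∀ β < δ, ∃ n, β ≤ η n

def IsClub' (C : Set Ordinal) : Prop :=
  C ⊆ Set.Iio omega1 ∧
  (∀ α < omega1, ∃ β ∈ C, α < β) ∧
  (∀ δ < omega1, Order.IsSuccLimit δ → (∀ α < δ, ∃ β ∈ C, α < β ∧ β < δ) → δ ∈ C)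

def IsStat (S : Set Ordinal) : Prop := ∀ C, IsClub' C → (S ∩ C).Nonempty

/-- The ladder-system topology `X(η)` on `ω₁`: points outside `S` are isolated, and a set
`U` is open iff for every `δ ∈ U ∩ S` it contains a tail of the ladder at `δ`. -/
def ladderTop (S : Set O1) (η : O1 → ℕ → O1) : TopologicalSpace O1 where
  IsOpen U := ∀ α ∈ U, α ∈ S → ∃ n : ℕ, ∀ m, n ≤ m → η α m ∈ U
  isOpen_univ := fun _ _ _ => ⟨0, fun _ _ => Set.mem_univ _⟩
  isOpen_inter := by
    intro U V hU hV α hα hαS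
    obtain ⟨n, hn⟩ := hU α hα.1 hαS
    obtain ⟨k, hk⟩ := hV α hα.2 hαS
    exact ⟨max n k, fun m hm =>
      ⟨hn m (le_trans (le_max_left _ _) hm), hk m (le_trans (le_max_right _ _) hm)⟩⟩
  isOpen_sUnion := by
    intro s hs α hα hαS
    obtain ⟨U, hUs, hαU⟩ := hα
    obtain ⟨n, hn⟩ := hs U hUs α hαU hαS
    exact ⟨n, fun m hm => ⟨U, hUs, hn m hm⟩⟩

open Cardinal Filter Topology

lemma omega1_eq_omega_one : omega1 = ω₁ := ord_aleph 1

lemma aleph0_lt_cof_omega1 : ℵ₀ < omega1.cof := by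
  rw [omega1_eq_omega_one, cof_omega_one]
  exact aleph0_lt_aleph_one

lemma isSuccLimit_omega1 : Order.IsSuccLimit omega1 :=
  isSuccLimit_ord aleph0_lt_aleph_one.le

lemma iSup_lt_omega1 {ι : Type*} [Countable ι] {f : ι → Ordinal} (hf : ∀ i, f i < omega1) :
    ⨆ i, f i < omega1 := by
  rw [omega1_eq_omega_one] at *
  exact iSup_lt_omega_one hf

lemma countable_Iio_of_lt_omega1 {x : Ordinal} (hx : x < omega1) : (Iio x).Countable := by
  rw [← le_aleph0_iff_set_countable, Cardinal.mk_Iio_ordinal, lift_le_aleph0, ← lt_aleph_one_iff]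
  exact lt_ord.1 hx

section Fodor

variable {T : Set O1} {G : O1 → O1}

def closurePoints (T : Set O1) (G : O1 → O1) : Set Ordinal :=
  {x | x < omega1 ∧ ∀ τ ∈ T, (G τ : Ordinal) < x → (τ : Ordinal) < x}

lemma countable_setOf_lt_of_injOn (hG : InjOn G T) {x : Ordinal} (hx : x < omega1) :
    {τ ∈ T | (G τ : Ordinal) < x}.Countable :=
  MapsTo.countable_of_injOn (t := Subtype.val ⁻¹' Iio x) (fun _ hτ => hτ.2)
    (hG.mono fun _ hτ => hτ.1) ((countable_Iio_of_lt_omega1 hx).preimage Subtype.val_injective)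

lemma exists_closurePoints_gt (hG : InjOn G T) {α : Ordinal} (hα : α < omega1) :
    ∃ β ∈ closurePoints T G, α < β := by
  let f : Ordinal → Ordinal := fun x =>
    ⨆ τ : {τ ∈ T | (G τ : Ordinal) < x}, Order.succ (τ : Ordinal)
  have hf : ∀ x < omega1, f x < omega1 := fun x hx =>
    have := (countable_setOf_lt_of_injOn hG hx).to_subtype
    iSup_lt_omega1 fun τ => isSuccLimit_omega1.succ_lt τ.1.2
  set β := nfp f (Order.succ α)
  have hβ : β < omega1 := nfp_lt_ord aleph0_lt_cof_omega1 hf (isSuccLimit_omega1.succ_lt hα)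
  refine ⟨β, ⟨hβ, fun τ hτ hGτ => ?_⟩, (Order.lt_succ α).trans_le (le_nfp f _)⟩
  obtain ⟨n, hn⟩ := lt_nfp_iff.1 hGτ
  set x := f^[n] (Order.succ α)
  have := (countable_setOf_lt_of_injOn hG ((iterate_le_nfp f _ n).trans_lt hβ)).to_subtype
  calc (τ : Ordinal) < Order.succ (τ : Ordinal) := Order.lt_succ _
    _ ≤ f x := Ordinal.le_iSup
        (fun τ : {τ ∈ T | (G τ : Ordinal) < x} => Order.succ (τ : Ordinal)) ⟨τ, hτ, hn⟩
    _ = f^[n + 1] (Order.succ α) := (Function.iterate_succ_apply' f n _).symm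
    _ ≤ β := iterate_le_nfp f _ _

lemma isClub'_closurePoints (hG : InjOn G T) : IsClub' (closurePoints T G) := by
  refine ⟨fun x hx => hx.1, fun α hα => exists_closurePoints_gt hG hα,
    fun δ hδ _ hcof => ⟨hδ, fun τ hτ hGτ => ?_⟩⟩
  obtain ⟨β, hβ, hGβ, hβδ⟩ := hcof _ hGτ
  exact (hβ.2 τ hτ hGβ).trans hβδ

theorem IsStat.not_injOn_of_lt (hT : IsStat (Subtype.val '' T)) (hG : ∀ τ ∈ T, G τ < τ) :
    ¬ InjOn G T := by
  intro hinj
  obtain ⟨_, ⟨τ, hτ, rfl⟩, -, hτC⟩ := hT _ (isClub'_closurePoints hinj)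
  exact lt_irrefl _ (hτC τ hτ (hG τ hτ))

end Fodor

lemma exists_injOn_of_isolated {X : Type*} [PseudoMetricSpace X] {S : Set X} {A : X → Set X}
    (hS : ∀ x ∈ S, ∃ ε > 0, ∀ y ∈ S, dist y x < ε → y = x)
    (hA : ∀ x ∈ S, ∀ ε > 0, ∃ a ∈ A x, dist a x < ε) :
    ∃ g : X → X, InjOn g S ∧ ∀ x ∈ S, g x ∈ A x := by
  choose! ε hε hεS using hS
  choose! g hgA hg using fun x hx => hA x hx (ε x / 2) (half_pos (hε x hx))
  refine ⟨g, fun x hx y hy hxy => ?_, hgA⟩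
  wlog hle : ε y ≤ ε x generalizing x y
  · exact (this y hy x hx hxy.symm (le_of_not_ge hle)).symm
  refine (hεS x hx y hy ?_).symm
  calc dist y x ≤ dist y (g y) + dist (g x) x := by rw [hxy]; exact dist_triangle _ _ _
    _ < ε y / 2 + ε x / 2 := by rw [dist_comm]; exact add_lt_add (hg y hy) (hg x hx)
    _ ≤ ε x := by linarith

section LadderTop

variable {S : Set O1} {η : O1 → ℕ → O1} {δ : O1}

lemma ladderTop_isOpen_insert_range (hη : ∀ n, η δ n ∉ S) :
    IsOpen[ladderTop S η] (insert δ (range (η δ))) := by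
  rintro α (rfl | ⟨n, rfl⟩) hα
  · exact ⟨0, fun m _ => mem_insert_of_mem _ (mem_range_self m)⟩
  · exact absurd hα (hη n)

lemma ladderTop_tendsto (hδ : δ ∈ S) :
    Tendsto (η δ) atTop (@nhds O1 (ladderTop S η) δ) := by
  let := ladderTop S η
  refine tendsto_nhds.2 fun U hU hδU => ?_
  obtain ⟨n, hn⟩ := hU δ hδU hδ
  exact eventually_atTop.2 ⟨n, hn⟩

end LadderTop

/-- If `S ⊆ lim(ω₁)` is stationary and `η` is a ladder system on `S` whose ladders
consist of successor ordinals, then the space `X(η)` is not metrizable. -/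
theorem stmt19 (S : Set O1) (η : O1 → ℕ → O1)
    (hS : ∀ δ ∈ S, Order.IsSuccLimit ((δ : O1) : Ordinal))
    (hstat : IsStat ((fun δ : O1 => (δ : Ordinal)) '' S))
    (hladder : ∀ δ ∈ S, IsLadderOn ((δ : O1) : Ordinal)
      (fun n => ((η δ n : O1) : Ordinal)))
    (hsucc : ∀ δ ∈ S, ∀ n, ∃ β : Ordinal, ((η δ n : O1) : Ordinal) = β + 1) :
    ¬ @TopologicalSpace.MetrizableSpace O1 (ladderTop S η) := by
  intro hmet
  let := @TopologicalSpace.metrizableSpaceMetric O1 (ladderTop S η) hmet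
  have hnotS : ∀ δ ∈ S, ∀ n, η δ n ∉ S := fun δ hδ n hmem => by
    obtain ⟨β, hβ⟩ := hsucc δ hδ n
    have hlim := hS _ hmem
    rw [hβ, ← Order.succ_eq_add_one] at hlim
    exact Order.not_isSuccLimit_succ β hlim
  obtain ⟨g, hinj, hg⟩ : ∃ g : O1 → O1, InjOn g S ∧ ∀ δ ∈ S, g δ ∈ range (η δ) := by
    refine exists_injOn_of_isolated (fun δ hδ => ?_) fun δ hδ ε hε => ?_
    · obtain ⟨ε, hε, hball⟩ := Metric.isOpen_iff.1
        (ladderTop_isOpen_insert_range (hnotS δ hδ)) δ (mem_insert δ _)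
      refine ⟨ε, hε, fun τ hτ hτδ => ?_⟩
      obtain h | ⟨n, rfl⟩ := hball (Metric.mem_ball.2 hτδ)
      · exact h
      · exact absurd hτ (hnotS δ hδ n)
    · obtain ⟨n, hn⟩ := ((ladderTop_tendsto hδ).eventually (Metric.ball_mem_nhds δ hε)).exists
      exact ⟨η δ n, mem_range_self n, hn⟩
  refine IsStat.not_injOn_of_lt hstat (fun δ hδ => ?_) hinj
  obtain ⟨n, hn⟩ := hg δ hδ
  exact hn ▸ (hladder δ hδ).2.1 n
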